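/- Let k be a field, V a nonzero k-vector space, and R a unital k-subalgebra of End_k(V). Then R is triangularizable if and only if R is contained in a unital k-subalgebra A of End_k(V) such that A/rad(A) is isomorphic to k^Ω as topological k-algebras for some set Ω (with A carrying the subspace topology from the function topology, A/rad(A) the quotient topology, and k^Ω the product topology with k discrete), and rad(A) is topologically nilpotent as a set. Moreover, if such an A exists and R is closed in the function topology, then rad(R) = R ∩ rad(A). -/

import Mathlib

/-!
For a well-ordered basis, the diagonal of a triangular map is an open continuous surjection onto
`k^ι`; its kernel, the strictly triangular maps, is topologically nilpotent, and it is the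
radical because `1 - n` is inverted by the geometric series, which converges in the function
topology to an element of the (closed) triangular algebra. Conversely, when `A/rad(A) ≅ k^Ω`,
every proper subspace `U` has a vector `v ∉ U` with `A v ⊆ k v + U`; choosing such vectors
transfinitely gives a triangularizing well-ordered basis. For closed `R ⊆ A`, an element of
`R ∩ rad(A)` lies in `rad(R)` by the same geometric series argument inside `R`.
-/

universe u v

variable {k : Type u} [Field k]

/-- The function (finite/pointwise) topology on `End_k(V)`: the topology induced from the
product topology on `V → V` where `V` carries the discrete topology. -/
instance endFunctionTopology {V : Type v} [AddCommGroup V] [Module k V] :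
    TopologicalSpace (Module.End k V) :=
  TopologicalSpace.induced (fun T => (T : V → V))
    (@Pi.topologicalSpace V (fun _ => V) (fun _ => ⊥))

/-- The product topology on `Ω → k` where each factor `k` is discrete. -/
def discretePiTopology (Ω K : Type*) : TopologicalSpace (Ω → K) :=
  @Pi.topologicalSpace Ω (fun _ => K) (fun _ => ⊥)

/-- `seqProd f n = f (n-1) * ⋯ * f 1 * f 0`, the composition `Tₙ ⋯ T₂ T₁` of the first `n`
terms of the sequence `f` (and the identity for `n = 0`). -/
def seqProd {V : Type v} [AddCommGroup V] [Module k V]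
    (f : ℕ → Module.End k V) : ℕ → Module.End k V
  | 0 => 1
  | n + 1 => f n * seqProd f n

/-- A subset `X ⊆ End_k(V)` is topologically nilpotent if for every sequence of elements of
`X` and every finite-dimensional subspace `W` of `V`, some initial composition
`Tₙ ⋯ T₂ T₁` annihilates `W`. -/
def IsTopNilpotentSet {V : Type v} [AddCommGroup V] [Module k V]
    (X : Set (Module.End k V)) : Prop :=
  ∀ f : ℕ → Module.End k V, (∀ n, f n ∈ X) →
    ∀ W : Submodule k V, FiniteDimensional k ↥W →
      ∃ n : ℕ, 0 < n ∧ ∀ w ∈ W, seqProd f n w = 0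

/-- `A/rad(A) ≅ k^Ω` as topological `k`-algebras (for some set `Ω`), witnessed by a
surjective, continuous, open `k`-algebra homomorphism `A → k^Ω` whose kernel is the
Jacobson radical `rad(A) = Ideal.jacobson ⊥` (the intersection of the maximal left
ideals), together with the topological nilpotence of `rad(A)`. -/
def GoodAlgebra {V : Type v} [AddCommGroup V] [Module k V]
    (A : Subalgebra k (Module.End k V)) : Prop :=
  (∃ (Ω : Type v) (φ : A →ₐ[k] (Ω → k)), Function.Surjective ⇑φ ∧
    (∀ x : A, φ x = 0 ↔ x ∈ Ideal.jacobson (⊥ : Ideal A)) ∧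
    (@Continuous ↥A (Ω → k) inferInstance (discretePiTopology Ω k) ⇑φ) ∧
    (@IsOpenMap ↥A (Ω → k) inferInstance (discretePiTopology Ω k) ⇑φ)) ∧
  IsTopNilpotentSet {T : Module.End k V |
    ∃ y : A, y ∈ Ideal.jacobson (⊥ : Ideal A) ∧ (y : Module.End k V) = T}

open Submodule Topology

namespace discretePiTopology

variable {α β : Type*}

theorem continuous_apply (a : α) :
    Continuous[discretePiTopology α β, ⊥] fun g : α → β => g a :=
  @_root_.continuous_apply α (fun _ => β) (fun _ => ⊥) a

theorem isOpen_setOf_forall_eq (F : Finset α) (g : α → β) :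
    IsOpen[discretePiTopology α β] {h | ∀ a ∈ F, h a = g a} := by
  let _ : TopologicalSpace β := ⊥
  have _ : DiscreteTopology β := ⟨rfl⟩
  have : {h : α → β | ∀ a ∈ F, h a = g a} = (F : Set α).pi fun a => {g a} := by
    ext h; simp [Set.mem_pi]
  rw [this]
  exact isOpen_set_pi F.finite_toSet fun a _ => isOpen_discrete _

theorem exists_finset_subset {O : Set (α → β)} (hO : IsOpen[discretePiTopology α β] O)
    {g : α → β} (hg : g ∈ O) : ∃ F : Finset α, {h | ∀ a ∈ F, h a = g a} ⊆ O := by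
  let _ : TopologicalSpace β := ⊥
  obtain ⟨F, u, hu, hsub⟩ := isOpen_pi_iff.1 hO g hg
  refine ⟨F, fun h hh => hsub fun a ha => ?_⟩
  show h a ∈ u a
  rw [hh a ha]
  exact (hu a ha).2

end discretePiTopology

namespace Module.End

variable {V : Type v} [AddCommGroup V] [Module k V]

theorem continuous_apply_discrete (v : V) : Continuous[_, ⊥] fun T : Module.End k V => T v := by
  let _ : TopologicalSpace (V → V) := discretePiTopology V V
  let _ : TopologicalSpace V := ⊥
  exact (discretePiTopology.continuous_apply v).comp continuous_induced_dom

theorem isClopen_setOf_apply_mem (v : V) (s : Set V) :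
    IsClopen {T : Module.End k V | T v ∈ s} := by
  let _ : TopologicalSpace V := ⊥
  have _ : DiscreteTopology V := ⟨rfl⟩
  exact (isClopen_discrete s).preimage (continuous_apply_discrete v)

theorem exists_finset_subset_of_isOpen {O : Set (Module.End k V)} (hO : IsOpen O)
    {T : Module.End k V} (hT : T ∈ O) : ∃ I : Finset V, {S | ∀ v ∈ I, S v = T v} ⊆ O := by
  let _ : TopologicalSpace (V → V) := discretePiTopology V V
  obtain ⟨O', hO', rfl⟩ := isOpen_induced_iff.1 hO
  obtain ⟨I, hI⟩ := discretePiTopology.exists_finset_subset hO' hT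
  exact ⟨I, fun S hS => hI hS⟩

theorem mem_closure_of_forall_finset {s : Set (Module.End k V)} {T : Module.End k V}
    (h : ∀ I : Finset V, ∃ S ∈ s, ∀ v ∈ I, S v = T v) : T ∈ closure s := by
  refine mem_closure_iff.2 fun O hO hT => ?_
  obtain ⟨I, hI⟩ := exists_finset_subset_of_isOpen hO hT
  obtain ⟨S, hS, hST⟩ := h I
  exact ⟨S, hI hST, hS⟩

end Module.End

section Nilpotent

variable {V : Type v} [AddCommGroup V] [Module k V]

theorem seqProd_succ' (f : ℕ → Module.End k V) (n : ℕ) :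
    seqProd f (n + 1) = seqProd (fun m => f (m + 1)) n * f 0 := by
  induction n with
  | zero => exact (mul_one _).trans (one_mul _).symm
  | succ n ih => rw [seqProd, ih, seqProd, mul_assoc]

theorem seqProd_const (T : Module.End k V) (n : ℕ) : seqProd (fun _ => T) n = T ^ n := by
  induction n with
  | zero => rfl
  | succ n ih => rw [seqProd, ih, pow_succ']

theorem monotone_ker_seqProd (f : ℕ → Module.End k V) :
    Monotone fun n => LinearMap.ker (seqProd f n) :=
  monotone_nat_of_le_succ fun n v hv => by
    simp only [LinearMap.mem_ker, seqProd, Module.End.mul_apply] at hv ⊢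
    rw [hv, map_zero]

def seqProdKer (f : ℕ → Module.End k V) : Submodule k V :=
  ⨆ n, LinearMap.ker (seqProd f n)

theorem mem_seqProdKer {f : ℕ → Module.End k V} {v : V} :
    v ∈ seqProdKer f ↔ ∃ n, seqProd f n v = 0 :=
  mem_iSup_of_directed _ (monotone_ker_seqProd f).directed_le

theorem isTopNilpotentSet_of_seqProdKer_eq_top {X : Set (Module.End k V)}
    (h : ∀ f : ℕ → Module.End k V, (∀ n, f n ∈ X) → seqProdKer f = ⊤) :
    IsTopNilpotentSet X := by
  intro f hf W hW
  have hcompact := (fg_iff_compact W).1 (Module.Finite.iff_fg.1 hW)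
  obtain ⟨_, ⟨n, rfl⟩, hn⟩ :=
    (CompleteLattice.isCompactElement_iff_le_of_directed_sSup_le _ W).1 hcompact _
      (Set.range_nonempty _) (monotone_ker_seqProd f).directed_le.directedOn_range
      (le_top.trans_eq (h f hf).symm)
  exact ⟨n + 1, n.succ_pos, fun w hw => monotone_ker_seqProd f n.le_succ (hn hw)⟩

namespace IsTopNilpotentSet

variable {X : Set (Module.End k V)}

theorem mono {Y : Set (Module.End k V)} (hX : IsTopNilpotentSet X) (hYX : Y ⊆ X) :
    IsTopNilpotentSet Y :=
  fun f hf => hX f fun n => hYX (hf n)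

theorem exists_seqProd_apply_eq_zero (hX : IsTopNilpotentSet X) {f : ℕ → Module.End k V}
    (hf : ∀ n, f n ∈ X) (v : V) : ∃ n, seqProd f n v = 0 := by
  obtain ⟨n, -, hn⟩ := hX f hf (span k {v}) inferInstance
  exact ⟨n, hn v (mem_span_singleton_self v)⟩

theorem exists_pow_eq_zero_on_finset {T : Module.End k V} (hT : IsTopNilpotentSet {T})
    (I : Finset V) : ∃ n, ∀ v ∈ I, (T ^ n) v = 0 := by
  obtain ⟨n, -, hn⟩ := hT (fun _ => T) (fun _ => rfl) (span k I) inferInstance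
  exact ⟨n, fun v hv => seqProd_const T n ▸ hn v (subset_span hv)⟩

theorem exists_notMem_forall_apply_mem (hX : IsTopNilpotentSet X) {U : Submodule k V}
    (hU : U ≠ ⊤) : ∃ v ∉ U, ∀ T ∈ X, T v ∈ U := by
  by_contra! hcon
  obtain ⟨v₀, hv₀⟩ : ∃ v, v ∉ U := by
    by_contra! h
    exact hU (eq_top_iff'.2 h)
  choose next hnextX hnext using fun v : {v // v ∉ U} => hcon v.1 v.2
  let orbit : ℕ → {v // v ∉ U} := fun n => n.rec ⟨v₀, hv₀⟩ fun _ v => ⟨next v v.1, hnext v⟩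
  have horbit : ∀ n, seqProd (fun m => next (orbit m)) n v₀ = (orbit n).1 := by
    intro n
    induction n with
    | zero => rfl
    | succ n ih => rw [seqProd, Module.End.mul_apply, ih]
  obtain ⟨n, hn⟩ := hX.exists_seqProd_apply_eq_zero (fun m => hnextX (orbit m)) v₀
  exact (orbit n).2 (horbit n ▸ hn ▸ U.zero_mem)

theorem isUnit_one_sub {T : Module.End k V} (hT : IsTopNilpotentSet {T}) :
    IsUnit (1 - T) := by
  refine (Module.End.isUnit_iff _).2 ⟨(injective_iff_map_eq_zero _).2 fun v hv => ?_, fun w => ?_⟩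
  · have hfix : ∀ n, (T ^ n) v = v := by
      have : T v = v := (sub_eq_zero.1 hv).symm
      intro n
      induction n with
      | zero => rfl
      | succ n ih => rw [pow_succ, Module.End.mul_apply, this, ih]
    obtain ⟨n, hn⟩ := hT.exists_pow_eq_zero_on_finset {v}
    rw [← hfix n, hn v (Finset.mem_singleton_self v)]
  · obtain ⟨n, hn⟩ := hT.exists_pow_eq_zero_on_finset {w}
    refine ⟨(∑ i ∈ Finset.range n, T ^ i) w, ?_⟩
    rw [← Module.End.mul_apply, mul_neg_geom_sum, LinearMap.sub_apply,
      hn w (Finset.mem_singleton_self w), sub_zero, Module.End.one_apply]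

end IsTopNilpotentSet

/-- The inverse of `1 - z` is the limit of the partial sums of the geometric series. -/
theorem Subalgebra.isUnit_one_sub_of_isClosed {S : Subalgebra k (Module.End k V)}
    (hS : IsClosed (S : Set (Module.End k V))) {z : S}
    (hz : IsTopNilpotentSet {(z : Module.End k V)}) : IsUnit (1 - z) := by
  obtain ⟨u, hu⟩ := hz.isUnit_one_sub
  have hmem : (↑u⁻¹ : Module.End k V) ∈ S := by
    refine hS.closure_subset (Module.End.mem_closure_of_forall_finset fun I => ?_)
    obtain ⟨n, hn⟩ := hz.exists_pow_eq_zero_on_finset I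
    refine ⟨∑ i ∈ Finset.range n, (z : Module.End k V) ^ i,
      S.sum_mem fun i _ => S.pow_mem z.2 i, fun v hv => ?_⟩
    have : ∑ i ∈ Finset.range n, (z : Module.End k V) ^ i
        = ↑u⁻¹ - ↑u⁻¹ * (z : Module.End k V) ^ n := by
      rw [← mul_one_sub, ← mul_neg_geom_sum, ← mul_assoc, ← hu, Units.inv_mul, one_mul]
    rw [this, LinearMap.sub_apply, Module.End.mul_apply, hn v hv, map_zero, sub_zero]
  refine ⟨⟨1 - z, ⟨_, hmem⟩, Subtype.ext ?_, Subtype.ext ?_⟩, rfl⟩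
  · change (1 - (z : Module.End k V)) * ↑u⁻¹ = 1
    rw [← hu, Units.mul_inv]
  · change ↑u⁻¹ * (1 - (z : Module.End k V)) = 1
    rw [← hu, Units.inv_mul]

end Nilpotent

section Jacobson

variable {S : Type*} [Ring S]

theorem mem_jacobson_bot_of_forall_isUnit {x : S} (h : ∀ y, IsUnit (1 - y * x)) :
    x ∈ Ideal.jacobson (⊥ : Ideal S) := by
  refine Ideal.mem_jacobson_iff.2 fun y => ?_
  obtain ⟨u, hu⟩ := h (-y)
  refine ⟨↑u⁻¹, ?_⟩
  have hyx : y * x + 1 = u := by rw [hu, neg_mul, sub_neg_eq_add, add_comm]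
  rw [Ideal.mem_bot, mul_assoc, ← mul_add_one, hyx, Units.inv_mul, sub_self]

theorem AlgHom.map_eq_zero_of_mem_jacobson [Algebra k S] (f : S →ₐ[k] k) {x : S}
    (hx : x ∈ Ideal.jacobson (⊥ : Ideal S)) : f x = 0 := by
  by_contra hfx
  obtain ⟨z, hz⟩ := Ideal.mem_jacobson_iff.1 hx (algebraMap k S (-(f x)⁻¹))
  have := congrArg f (Ideal.mem_bot.1 hz)
  simp [hfx] at this

end Jacobson

section Triangular

variable {V : Type v} [AddCommGroup V] [Module k V] {ι : Type*} [LinearOrder ι]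
  (b : Module.Basis ι k V)

theorem Module.Basis.repr_self_eq_zero_of_mem_span_Iio {i : ι} {u : V}
    (hu : u ∈ span k (b '' Set.Iio i)) : b.repr u i = 0 :=
  Finsupp.notMem_support_iff.1 fun hi => lt_irrefl i (b.mem_span_image.1 hu hi)

def triangular : Subalgebra k (Module.End k V) where
  carrier := {T | ∀ i, T (b i) ∈ span k (b '' Set.Iic i)}
  mul_mem' {T S} hT hS i := by
    have hTi : span k (b '' Set.Iic i) ≤ (span k (b '' Set.Iic i)).comap T := by
      refine span_le.2 ?_
      rintro _ ⟨j, hj, rfl⟩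
      exact span_mono (Set.image_mono (Set.Iic_subset_Iic.2 hj)) (hT j)
    exact hTi (hS i)
  add_mem' hT hS i := add_mem (hT i) (hS i)
  algebraMap_mem' c i := smul_mem _ c (subset_span ⟨i, le_rfl, rfl⟩)

variable {b}

theorem mem_triangular {T : Module.End k V} :
    T ∈ triangular b ↔ ∀ i, T (b i) ∈ span k (b '' Set.Iic i) := Iff.rfl

theorem span_image_Iio_le_comap {T : Module.End k V} (hT : T ∈ triangular b) (i : ι) :
    span k (b '' Set.Iio i) ≤ (span k (b '' Set.Iio i)).comap T := by
  refine span_le.2 ?_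
  rintro _ ⟨j, hj, rfl⟩
  exact span_mono (Set.image_mono (Set.Iic_subset_Iio.2 hj)) (hT j)

theorem exists_apply_basis_eq_smul_add {T : Module.End k V} (hT : T ∈ triangular b) (i : ι) :
    ∃ u ∈ span k (b '' Set.Iio i), T (b i) = b.repr (T (b i)) i • b i + u := by
  have hTi := hT i
  rw [← Set.Iio_insert, Set.image_insert_eq, mem_span_insert] at hTi
  obtain ⟨c, u, hu, hTu⟩ := hTi
  have hc : b.repr (T (b i)) i = c := by
    simp [hTu, b.repr_self_eq_zero_of_mem_span_Iio hu]
  exact ⟨u, hu, hc ▸ hTu⟩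

variable (b) in
theorem isClosed_triangular :
    IsClosed (triangular b : Set (Module.End k V)) := by
  have : (triangular b : Set (Module.End k V)) =
      ⋂ i, {T : Module.End k V | T (b i) ∈ (span k (b '' Set.Iic i) : Set V)} := by
    ext T; simp [mem_triangular]
  rw [this]
  exact isClosed_iInter fun i => (Module.End.isClopen_setOf_apply_mem _ _).isClosed

variable (b) in
noncomputable def diagHom : triangular b →ₐ[k] (ι → k) where
  toFun T i := b.repr ((T : Module.End k V) (b i)) i
  map_one' := by ext i; simp
  map_zero' := by ext i; simp
  map_add' T S := by ext i; simp
  map_mul' T S := by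
    ext i
    obtain ⟨u, hu, hSu⟩ := exists_apply_basis_eq_smul_add S.2 i
    obtain ⟨u', hu', hTu'⟩ := exists_apply_basis_eq_smul_add T.2 i
    have hTu := span_image_Iio_le_comap T.2 i hu
    have key : (T : Module.End k V) ((S : Module.End k V) (b i)) =
        (b.repr ((S : Module.End k V) (b i)) i * b.repr ((T : Module.End k V) (b i)) i) • b i
          + (b.repr ((S : Module.End k V) (b i)) i • u' + (T : Module.End k V) u) := by
      conv_lhs => rw [hSu, map_add, map_smul, hTu']
      rw [smul_add, smul_smul, add_assoc]
    change b.repr ((T : Module.End k V) ((S : Module.End k V) (b i))) i = _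
    rw [key]
    simp [b.repr_self_eq_zero_of_mem_span_Iio hu', b.repr_self_eq_zero_of_mem_span_Iio hTu,
      mul_comm]
  commutes' c := by ext i; simp

theorem diagHom_apply (T : triangular b) (i : ι) :
    diagHom b T i = b.repr ((T : Module.End k V) (b i)) i := rfl

theorem apply_basis_mem_span_Iio_of_diagHom_eq_zero {T : triangular b} (hT : diagHom b T = 0)
    (i : ι) : (T : Module.End k V) (b i) ∈ span k (b '' Set.Iio i) := by
  obtain ⟨u, hu, hTu⟩ := exists_apply_basis_eq_smul_add T.2 i
  rwa [hTu, ← diagHom_apply, hT, Pi.zero_apply, zero_smul, zero_add]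

end Triangular

section Diagonal

variable {V : Type v} [AddCommGroup V] [Module k V] {ι : Type*} [LinearOrder ι]
  {b : Module.Basis ι k V}

variable (b) in
noncomputable def diagonal (d : ι → k) : triangular b :=
  ⟨b.constr k fun i => d i • b i, fun i => by
    rw [b.constr_basis]
    exact smul_mem _ _ (subset_span ⟨i, le_rfl, rfl⟩)⟩

theorem diagHom_diagonal (d : ι → k) : diagHom b (diagonal b d) = d := by
  ext i
  simp [diagHom_apply, diagonal]

theorem diagonal_apply_eq_zero {d : ι → k} {v : V} (hd : ∀ i ∈ (b.repr v).support, d i = 0) :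
    (diagonal b d : Module.End k V) v = 0 := by
  rw [diagonal, b.constr_apply]
  exact Finset.sum_eq_zero fun i hi => by simp only [hd i hi, zero_smul, smul_zero]

theorem continuous_diagHom :
    Continuous[_, discretePiTopology ι k] (diagHom b) := by
  let _ : TopologicalSpace k := ⊥
  have _ : DiscreteTopology k := ⟨rfl⟩
  refine continuous_pi fun i => continuous_discrete_rng.2 fun c => ?_
  exact (Module.End.isClopen_setOf_apply_mem (b i) {v | b.repr v i = c}).isOpen.preimage
    continuous_subtype_val

/-- Perturbing the diagonal away from the finitely many coordinates that a basic
neighbourhood sees does not leave that neighbourhood. -/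
theorem isOpenMap_diagHom :
    @IsOpenMap _ _ _ (discretePiTopology ι k) (diagHom b) := by
  intro O hO
  refine (@isOpen_iff_forall_mem_open _ (discretePiTopology ι k) _).2 ?_
  rintro _ ⟨T, hT, rfl⟩
  obtain ⟨O', hO', rfl⟩ := isOpen_induced_iff.1 hO
  obtain ⟨I, hI⟩ := Module.End.exists_finset_subset_of_isOpen hO' hT
  classical
  let F := I.biUnion fun v => (b.repr v).support
  refine ⟨{g | ∀ i ∈ F, g i = diagHom b T i}, fun g hg => ?_,
    discretePiTopology.isOpen_setOf_forall_eq F _, fun _ _ => rfl⟩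
  refine ⟨T + diagonal b (g - diagHom b T), hI fun v hv => ?_, ?_⟩
  · have hd : ∀ i ∈ (b.repr v).support, (g - diagHom b T) i = 0 := fun i hi =>
      sub_eq_zero.2 (hg i (Finset.mem_biUnion.2 ⟨v, hv, hi⟩))
    simp [diagonal_apply_eq_zero hd]
  · rw [map_add, diagHom_diagonal, add_sub_cancel]

end Diagonal

section StrictlyTriangular

variable {V : Type v} [AddCommGroup V] [Module k V] {ι : Type*} [LinearOrder ι]
  [WellFoundedLT ι]

/-- Strictly triangular maps kill each `b j` after finitely many steps, by well-founded
induction on `j`: one step lands in the span of the `b i` with `i < j`. -/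
theorem isTopNilpotentSet_strictlyTriangular (b : Module.Basis ι k V) :
    IsTopNilpotentSet {T : Module.End k V | ∀ i, T (b i) ∈ span k (b '' Set.Iio i)} := by
  refine isTopNilpotentSet_of_seqProdKer_eq_top fun f hf => eq_top_iff.2 ?_
  suffices h : ∀ j, ∀ f : ℕ → Module.End k V,
      (∀ n i, f n (b i) ∈ span k (b '' Set.Iio i)) → b j ∈ seqProdKer f by
    rw [← b.span_eq, span_le]
    rintro _ ⟨j, rfl⟩
    exact h j f hf
  intro j
  induction j using WellFoundedLT.induction with
  | _ j ih =>
    intro f hf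
    have hle : span k (b '' Set.Iio j) ≤ seqProdKer fun m => f (m + 1) := by
      refine span_le.2 ?_
      rintro _ ⟨i, hi, rfl⟩
      exact ih i hi _ fun n => hf (n + 1)
    obtain ⟨n, hn⟩ := mem_seqProdKer.1 (hle (hf 0 j))
    exact mem_seqProdKer.2 ⟨n + 1, by rw [seqProd_succ', Module.End.mul_apply, hn]⟩

theorem mem_jacobson_iff_diagHom_eq_zero {b : Module.Basis ι k V} {T : triangular b} :
    T ∈ Ideal.jacobson (⊥ : Ideal (triangular b)) ↔ diagHom b T = 0 := by
  refine ⟨fun hT => funext fun i =>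
    ((Pi.evalAlgHom k (fun _ => k) i).comp (diagHom b)).map_eq_zero_of_mem_jacobson hT,
    fun hT => mem_jacobson_bot_of_forall_isUnit fun S => ?_⟩
  have hST : diagHom b (S * T) = 0 := by rw [map_mul, hT, mul_zero]
  refine Subalgebra.isUnit_one_sub_of_isClosed (isClosed_triangular b)
    ((isTopNilpotentSet_strictlyTriangular b).mono ?_)
  rintro _ rfl
  exact apply_basis_mem_span_Iio_of_diagHom_eq_zero hST

end StrictlyTriangular

theorem goodAlgebra_triangular {V : Type v} [AddCommGroup V] [Module k V] {ι : Type v}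
    [LinearOrder ι] [WellFoundedLT ι] (b : Module.Basis ι k V) :
    GoodAlgebra (triangular b) := by
  refine ⟨⟨ι, diagHom b, fun d => ⟨_, diagHom_diagonal d⟩,
    fun T => mem_jacobson_iff_diagHom_eq_zero.symm, continuous_diagHom, isOpenMap_diagHom⟩,
    (isTopNilpotentSet_strictlyTriangular b).mono ?_⟩
  rintro _ ⟨T, hT, rfl⟩
  exact apply_basis_mem_span_Iio_of_diagHom_eq_zero (mem_jacobson_iff_diagHom_eq_zero.1 hT)

section Eigenvector

variable {V : Type v} [AddCommGroup V] [Module k V]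

/-- Choose `v₁ ∉ U` with `rad(A) v₁ ⊆ U`. Since `φ` is open, the open set of `a` with
`a v₁ ∉ U` contains an `a` with `φ a = 1_F` for a finite `F ⊆ Ω`; writing
`a ≡ ∑_{ω ∈ F} e_ω` modulo `rad(A)` with `φ e_ω = δ_ω`, some `v = e_ω v₁` lies outside `U`,
and `c e_ω ≡ (φ c ω) e_ω` modulo `rad(A)` gives `c v ∈ k v + U`. -/
theorem GoodAlgebra.exists_notMem_apply_mem_span_sup {A : Subalgebra k (Module.End k V)}
    (hA : GoodAlgebra A) {U : Submodule k V} (hU : U ≠ ⊤) :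
    ∃ v ∉ U, ∀ a ∈ A, a v ∈ span k {v} ⊔ U := by
  classical
  obtain ⟨⟨Ω, φ, hsurj, hker, -, hopen⟩, hnil⟩ := hA
  obtain ⟨v₁, hv₁, hradv₁⟩ := hnil.exists_notMem_forall_apply_mem hU
  have hφv₁ : ∀ y : A, φ y = 0 → (y : Module.End k V) v₁ ∈ U := fun y hy =>
    hradv₁ _ ⟨y, (hker y).1 hy, rfl⟩
  let C : Set A := {a | (a : Module.End k V) v₁ ∉ U}
  have hC : IsOpen C :=
    (Module.End.isClopen_setOf_apply_mem v₁ (U : Set V)ᶜ).isOpen.preimage continuous_subtype_val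
  obtain ⟨F, hF⟩ := discretePiTopology.exists_finset_subset (hopen C hC)
    (show φ 1 ∈ φ '' C from ⟨1, hv₁, rfl⟩)
  obtain ⟨a, haC, hφa⟩ : ∑ ω ∈ F, Pi.single ω 1 ∈ φ '' C := hF fun ω hω => by
    simp [hω]
  choose e he using fun ω : Ω => hsurj (Pi.single ω 1)
  obtain ⟨ω, -, hω⟩ : ∃ ω ∈ F, (e ω : Module.End k V) v₁ ∉ U := by
    by_contra! h
    have hsum : ((∑ ω ∈ F, e ω : A) : Module.End k V) v₁ ∈ U := by
      simpa using U.sum_mem h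
    have hdiff := hφv₁ (a - ∑ ω ∈ F, e ω) (by simp [hφa, he])
    refine haC ?_
    simpa using U.add_mem hdiff hsum
  refine ⟨_, hω, fun c hc => ?_⟩
  have hdiff := hφv₁ (⟨c, hc⟩ * e ω - φ ⟨c, hc⟩ ω • e ω) (by
    ext ω'
    by_cases h : ω' = ω <;> simp [he, h])
  have : c ((e ω : Module.End k V) v₁) = φ ⟨c, hc⟩ ω • (e ω : Module.End k V) v₁
      + ((⟨c, hc⟩ * e ω - φ ⟨c, hc⟩ ω • e ω : A) : Module.End k V) v₁ := by
    simp
  rw [this]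
  exact add_mem (mem_sup_left (smul_mem _ _ (mem_span_singleton_self _))) (mem_sup_right hdiff)

end Eigenvector

section Triangularization

variable {V : Type v} [AddCommGroup V] [Module k V]

def IsTriangularizable (X : Set (Module.End k V)) : Prop :=
  ∃ (ι : Type v) (lo : LinearOrder ι), WellFounded lo.lt ∧
    ∃ b : Module.Basis ι k V, ∀ T ∈ X, ∀ i : ι,
      T (b i) ∈ Submodule.span k (⇑b '' {j | lo.le j i})

theorem IsTriangularizable.mono {X Y : Set (Module.End k V)} (hX : IsTriangularizable X)
    (hYX : Y ⊆ X) : IsTriangularizable Y := by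
  obtain ⟨ι, lo, hwf, b, hb⟩ := hX
  exact ⟨ι, lo, hwf, b, fun T hT => hb T (hYX hT)⟩

theorem linearIndependent_of_notMem_span_Iio {ι : Type*} [LinearOrder ι] {g : ι → V}
    (hg : ∀ i, g i ∉ span k (g '' Set.Iio i)) : LinearIndependent k g := by
  rw [linearIndependent_iff]
  intro l hl
  by_contra hne
  have hs : l.support.Nonempty := Finsupp.support_nonempty_iff.2 hne
  set m := l.support.max' hs
  have hm : l m ≠ 0 := Finsupp.mem_support_iff.1 (l.support.max'_mem hs)
  have herase : Finsupp.linearCombination k g (l.erase m) ∈ span k (g '' Set.Iio m) := by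
    refine (Finsupp.mem_span_image_iff_linearCombination k).2 ⟨_, fun i hi => ?_, rfl⟩
    rw [Finsupp.support_erase, Finset.mem_coe, Finset.mem_erase] at hi
    exact lt_of_le_of_ne (l.support.le_max' i hi.2) hi.1
  have hsplit : l m • g m = -Finsupp.linearCombination k g (l.erase m) := by
    rw [eq_neg_iff_add_eq_zero, add_comm, ← Finsupp.linearCombination_single k, ← map_add,
      Finsupp.erase_add_single, hl]
  apply hg m
  rw [← inv_smul_smul₀ hm (g m), hsplit]
  exact smul_mem _ _ (neg_mem herase)

theorem exists_span_image_Iio_eq_top {ι₀ : Type v} [LinearOrder ι₀] {f : ι₀ → V}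
    (hcard : Cardinal.mk V < Cardinal.mk ι₀)
    (hf : ∀ i, span k (f '' Set.Iio i) ≠ ⊤ → f i ∉ span k (f '' Set.Iio i)) :
    ∃ σ, span k (f '' Set.Iio σ) = ⊤ := by
  by_contra! h
  have hinj : Function.Injective f := by
    intro i j hij
    by_contra hne
    wlog hlt : i < j generalizing i j
    · exact this hij.symm (Ne.symm hne) (lt_of_le_of_ne (not_lt.1 hlt) (Ne.symm hne))
    exact hf j (h j) (hij ▸ subset_span ⟨i, hlt, rfl⟩)
  exact hcard.not_ge (Cardinal.mk_le_of_injective hinj)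

variable (X : Set (Module.End k V))

open Classical in
noncomputable def flagStep (U : Submodule k V) : V :=
  if h : ∃ v ∉ U, ∀ T ∈ X, T v ∈ span k {v} ⊔ U then h.choose else 0

theorem apply_flagStep_mem (U : Submodule k V) :
    ∀ T ∈ X, T (flagStep X U) ∈ span k {flagStep X U} ⊔ U := by
  unfold flagStep
  split_ifs with h
  · exact h.choose_spec.2
  · simp

theorem flagStep_notMem {U : Submodule k V}
    (h : ∃ v ∉ U, ∀ T ∈ X, T v ∈ span k {v} ⊔ U) : flagStep X U ∉ U := by
  rw [flagStep, dif_pos h]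
  exact h.choose_spec.1

theorem exists_forall_eq_flagStep (ι₀ : Type*) [LinearOrder ι₀] [WellFoundedLT ι₀] :
    ∃ f : ι₀ → V, ∀ i, f i = flagStep X (span k (f '' Set.Iio i)) :=
  ⟨wellFounded_lt.fix fun i ih => flagStep X (span k (Set.range fun j : Set.Iio i => ih j j.2)),
    fun i => by rw [WellFounded.fix_eq, Set.image_eq_range]⟩

/-- A sequence built by `flagStep`, indexed by an ordinal too large to inject into `V`, reaches
a spanning initial segment; the segment below the first such index is the triangularizing
basis. -/
theorem isTriangularizable_of_forall_exists
    (hX : ∀ U : Submodule k V, U ≠ ⊤ → ∃ v ∉ U, ∀ T ∈ X, T v ∈ span k {v} ⊔ U) :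
    IsTriangularizable X := by
  obtain ⟨f, hf⟩ := exists_forall_eq_flagStep X (Order.succ (Cardinal.mk V)).ord.ToType
  have hnotMem : ∀ i, span k (f '' Set.Iio i) ≠ ⊤ → f i ∉ span k (f '' Set.Iio i) :=
    fun i hi => hf i ▸ flagStep_notMem X (hX _ hi)
  have htop := exists_span_image_Iio_eq_top
    (by rw [Cardinal.mk_ord_toType]; exact Order.lt_succ _) hnotMem
  obtain ⟨σ, hσ, hmin⟩ := wellFounded_lt.has_min _ htop
  let g : Set.Iio σ → V := fun i => f i
  have himage : ∀ i, g '' Set.Iio i = f '' Set.Iio (i : _) := by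
    intro i
    ext v
    constructor
    · rintro ⟨j, hj, rfl⟩
      exact ⟨j, hj, rfl⟩
    · rintro ⟨j, hj, rfl⟩
      exact ⟨⟨j, Set.mem_Iio.2 (lt_trans hj i.2)⟩, hj, rfl⟩
  have hli : LinearIndependent k g := linearIndependent_of_notMem_span_Iio fun i =>
    himage i ▸ hnotMem i fun hi => hmin i hi i.2
  have hrange : Set.range g = f '' Set.Iio σ := by
    ext v
    constructor
    · rintro ⟨j, rfl⟩
      exact ⟨j, j.2, rfl⟩
    · rintro ⟨j, hj, rfl⟩
      exact ⟨⟨j, hj⟩, rfl⟩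
  let b := Module.Basis.mk hli (hrange ▸ hσ.ge)
  refine ⟨Set.Iio σ, inferInstance, wellFounded_lt, b, fun T hT i => ?_⟩
  have hTi := hf i ▸ apply_flagStep_mem X _ T hT
  change T (b i) ∈ span k (b '' Set.Iic i)
  rwa [Module.Basis.coe_mk, ← Set.Iio_insert, Set.image_insert_eq, span_insert, himage]

end Triangularization

section Radical

variable {V : Type v} [AddCommGroup V] [Module k V] {R A : Subalgebra k (Module.End k V)}

theorem GoodAlgebra.isTriangularizable (hA : GoodAlgebra A) :
    IsTriangularizable (A : Set (Module.End k V)) :=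
  isTriangularizable_of_forall_exists _ fun _ hU => hA.exists_notMem_apply_mem_span_sup hU

theorem GoodAlgebra.inclusion_mem_jacobson (hA : GoodAlgebra A) (hRA : R ≤ A) {x : R}
    (hx : x ∈ Ideal.jacobson (⊥ : Ideal R)) :
    Subalgebra.inclusion hRA x ∈ Ideal.jacobson (⊥ : Ideal A) := by
  obtain ⟨⟨Ω, φ, -, hker, -⟩, -⟩ := hA
  exact (hker _).1 <| funext fun ω => AlgHom.map_eq_zero_of_mem_jacobson
    ((Pi.evalAlgHom k (fun _ => k) ω).comp (φ.comp (Subalgebra.inclusion hRA))) hx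

theorem mem_jacobson_of_inclusion_mem_jacobson (hRA : R ≤ A)
    (hR : IsClosed (R : Set (Module.End k V)))
    (hnil : IsTopNilpotentSet {T : Module.End k V |
      ∃ y : A, y ∈ Ideal.jacobson (⊥ : Ideal A) ∧ (y : Module.End k V) = T})
    {x : R} (hx : Subalgebra.inclusion hRA x ∈ Ideal.jacobson (⊥ : Ideal A)) :
    x ∈ Ideal.jacobson (⊥ : Ideal R) := by
  refine mem_jacobson_bot_of_forall_isUnit fun a => Subalgebra.isUnit_one_sub_of_isClosed hR ?_
  refine hnil.mono ?_
  rintro _ rfl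
  exact ⟨_, Ideal.mul_mem_left _ (Subalgebra.inclusion hRA a) hx, rfl⟩

theorem GoodAlgebra.mem_jacobson_iff_of_isClosed (hA : GoodAlgebra A) (hRA : R ≤ A)
    (hR : IsClosed (R : Set (Module.End k V))) (x : R) :
    x ∈ Ideal.jacobson (⊥ : Ideal R) ↔
      ∃ y : A, y ∈ Ideal.jacobson (⊥ : Ideal A) ∧ (y : Module.End k V) = x := by
  refine ⟨fun hx => ⟨_, hA.inclusion_mem_jacobson hRA hx, rfl⟩, ?_⟩
  rintro ⟨y, hy, hyx⟩
  obtain rfl : y = Subalgebra.inclusion hRA x := Subtype.ext hyx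
  exact mem_jacobson_of_inclusion_mem_jacobson hRA hR hA.2 hy

end Radical

theorem stmt_17_general {V : Type v} [AddCommGroup V] [Module k V]
    (R : Subalgebra k (Module.End k V)) :
    ((∃ (ι : Type v) (lo : LinearOrder ι), WellFounded lo.lt ∧
      ∃ b : Module.Basis ι k V, ∀ T ∈ (R : Set (Module.End k V)), ∀ i : ι,
        T (b i) ∈ Submodule.span k (⇑b '' {j | lo.le j i})) ↔
      ∃ A : Subalgebra k (Module.End k V), R ≤ A ∧ GoodAlgebra A) ∧
    (IsClosed (R : Set (Module.End k V)) →
      ∀ A : Subalgebra k (Module.End k V), R ≤ A → GoodAlgebra A →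
        ∀ x : R, x ∈ Ideal.jacobson (⊥ : Ideal R) ↔
          ∃ y : A, y ∈ Ideal.jacobson (⊥ : Ideal A) ∧
            (y : Module.End k V) = (x : Module.End k V)) := by
  refine ⟨⟨fun ⟨ι, lo, hwf, b, hb⟩ => ?_, fun ⟨A, hRA, hA⟩ => hA.isTriangularizable.mono hRA⟩,
    fun hR A hRA hA x => hA.mem_jacobson_iff_of_isClosed hRA hR x⟩
  let _ := lo
  have _ : WellFoundedLT ι := ⟨hwf⟩
  exact ⟨triangular b, hb, goodAlgebra_triangular b⟩

/-- a unital `k`-subalgebra `R` of `End_k(V)` is triangularizable iff it is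
contained in a unital `k`-subalgebra `A` with `A/rad(A) ≅ k^Ω` as topological `k`-algebras
for some set `Ω` and `rad(A)` topologically nilpotent; moreover, if such an `A` exists and
`R` is closed in the function topology, then `rad(R) = R ∩ rad(A)`. -/
theorem stmt_17 {V : Type v} [AddCommGroup V] [Module k V] [Nontrivial V]
    (R : Subalgebra k (Module.End k V)) :
    ((∃ (ι : Type v) (lo : LinearOrder ι), WellFounded lo.lt ∧
      ∃ b : Module.Basis ι k V, ∀ T ∈ (R : Set (Module.End k V)), ∀ i : ι,
        T (b i) ∈ Submodule.span k (⇑b '' {j | lo.le j i})) ↔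
      ∃ A : Subalgebra k (Module.End k V), R ≤ A ∧ GoodAlgebra A) ∧
    (IsClosed (R : Set (Module.End k V)) →
      ∀ A : Subalgebra k (Module.End k V), R ≤ A → GoodAlgebra A →
        ∀ x : R, x ∈ Ideal.jacobson (⊥ : Ideal R) ↔
          ∃ y : A, y ∈ Ideal.jacobson (⊥ : Ideal A) ∧
            (y : Module.End k V) = (x : Module.End k V)) :=
  stmt_17_general R
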